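/- arXiv:1209.2195 — 2 statements merged into one kernel-verified Lean document; each statement's English description precedes it below -/
import Mathlib

section
/- Let n ≥ 1 and let Ω be an open subset of ℂ × ℂⁿ with coordinates (t, z¹, …, zⁿ). Let Φ : Ω → ℝ be a C^∞ function; set g_{ij̄} := ∂²Φ/∂z^i∂z̄^j (1 ≤ i, j ≤ n) and assume that the Hermitian matrix g := (g_{ij̄}) is positive definite at every point of Ω; let (g^{j̄i}) denote the entries of g⁻¹. Then at every point of Ω one has the identity: −Σ_{i,j} g^{j̄i} ∂²/∂z^i∂z̄^j (∂²Φ/∂t∂t̄) = −∂²(log det g)/∂t∂t̄ − Σ_{i,j,k,s} g^{s̄i} g^{j̄k} (∂g_{ks̄}/∂t)(∂g_{ij̄}/∂t̄). -/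
open Complex
open scoped ComplexOrder

noncomputable section

/-- Wirtinger derivative `∂u/∂w` in the direction `e`. -/
def wD {E : Type*} [NormedAddCommGroup E] [NormedSpace ℂ E]
    (u : E → ℂ) (e : E) (x : E) : ℂ :=
  (1/2 : ℂ) * (fderiv ℝ u x e - Complex.I * fderiv ℝ u x (Complex.I • e))

/-- Conjugate Wirtinger derivative `∂u/∂w̄` in the direction `e`. -/
def wDbar {E : Type*} [NormedAddCommGroup E] [NormedSpace ℂ E]
    (u : E → ℂ) (e : E) (x : E) : ℂ :=
  (1/2 : ℂ) * (fderiv ℝ u x e + Complex.I * fderiv ℝ u x (Complex.I • e))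

/-- The total space `ℂ × ℂⁿ` with coordinates `(t, z¹, …, zⁿ)`. -/
abbrev Etz (n : ℕ) := ℂ × (Fin n → ℂ)

/-- The coordinate direction `∂/∂t`. -/
def dt (n : ℕ) : Etz n := (1, 0)

/-- The coordinate direction `∂/∂z^i`. -/
def dz (n : ℕ) (i : Fin n) : Etz n := (0, Pi.single i 1)

/-- The fiberwise metric `g_{ij̄} := ∂²Φ/∂z^i∂z̄^j` as a matrix-valued function. -/
def gmet {n : ℕ} (Φ : Etz n → ℝ) (x : Etz n) : Matrix (Fin n) (Fin n) ℂ :=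
  Matrix.of fun i j => wD (wDbar (fun p => (Φ p : ℂ)) (dz n j)) (dz n i) x

/-- The entries `g^{j̄i}` of the inverse metric (the first index is the row index). -/
def ginv {n : ℕ} (Φ : Etz n → ℝ) (x : Etz n) (j i : Fin n) : ℂ :=
  (gmet Φ x)⁻¹ j i

/-!
Mixed Wirtinger derivatives of the smooth potential commute, so the left side is
`-Σ g^{j̄i} ∂_t ∂̄_t g_{ij̄}`. Jacobi's formula gives `∂̄_t log det g = Σ g^{j̄i} ∂̄_t g_{ij̄}`;
differentiating once more with the product rule and `∂_t g⁻¹ = -g⁻¹ (∂_t g) g⁻¹` produces exactly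
the two terms on the right.
-/

open scoped Topology

section Wirtinger

variable {E : Type*} [NormedAddCommGroup E] [NormedSpace ℂ E] {u v : E → ℂ} {x : E}

/-- Covers both `∂` (`c = -I`) and `∂̄` (`c = I`), so each rule below is proved once. -/
def wirtingerDeriv (c : ℂ) (u : E → ℂ) (e x : E) : ℂ :=
  (1/2 : ℂ) * (fderiv ℝ u x e + c * fderiv ℝ u x (I • e))

theorem wD_eq_wirtingerDeriv (u : E → ℂ) (e : E) : wD u e = wirtingerDeriv (-I) u e := by
  funext x
  simp only [wD, wirtingerDeriv]
  ring

theorem wDbar_eq_wirtingerDeriv (u : E → ℂ) (e : E) : wDbar u e = wirtingerDeriv I u e := rfl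

theorem wirtingerDeriv_congr (h : u =ᶠ[𝓝 x] v) (c : ℂ) (e : E) :
    wirtingerDeriv c u e x = wirtingerDeriv c v e x := by
  simp only [wirtingerDeriv, h.fderiv_eq]

theorem Set.EqOn.wirtingerDeriv {Ω : Set E} (hΩ : IsOpen Ω) (h : Set.EqOn u v Ω) (c : ℂ) (e : E) :
    Set.EqOn (wirtingerDeriv c u e) (wirtingerDeriv c v e) Ω :=
  fun _ hy => wirtingerDeriv_congr (h.eventuallyEq_of_mem (hΩ.mem_nhds hy)) c e

theorem wirtingerDeriv_const (a c : ℂ) (e : E) : wirtingerDeriv c (fun _ => a) e x = 0 := by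
  simp [wirtingerDeriv]

theorem wirtingerDeriv_mul (hu : DifferentiableAt ℝ u x) (hv : DifferentiableAt ℝ v x)
    (c : ℂ) (e : E) :
    wirtingerDeriv c (fun y => u y * v y) e x
      = wirtingerDeriv c u e x * v x + u x * wirtingerDeriv c v e x := by
  simp only [wirtingerDeriv, fderiv_fun_mul hu hv, add_apply, smul_apply, smul_eq_mul]
  ring

theorem wirtingerDeriv_sum {ι : Type*} (s : Finset ι) {u : ι → E → ℂ}
    (hu : ∀ i ∈ s, DifferentiableAt ℝ (u i) x) (c : ℂ) (e : E) :
    wirtingerDeriv c (fun y => ∑ i ∈ s, u i y) e x = ∑ i ∈ s, wirtingerDeriv c (u i) e x := by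
  simp only [wirtingerDeriv, fderiv_fun_sum hu, sum_apply, Finset.mul_sum,
    ← Finset.sum_add_distrib]

theorem ContDiffOn.wirtingerDeriv {Ω : Set E} (hΩ : IsOpen Ω) (hu : ContDiffOn ℝ (⊤ : ℕ∞) u Ω)
    (c : ℂ) (e : E) : ContDiffOn ℝ (⊤ : ℕ∞) (wirtingerDeriv c u e) Ω := by
  have hDu : ContDiffOn ℝ (⊤ : ℕ∞) (fderiv ℝ u) Ω := hu.fderiv_of_isOpen hΩ (by simp)
  exact contDiffOn_const.mul
    ((hDu.clm_apply contDiffOn_const).add (contDiffOn_const.mul (hDu.clm_apply contDiffOn_const)))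

theorem wirtingerDeriv_wirtingerDeriv (hu : ContDiffAt ℝ 2 u x) (c c' : ℂ) (a b : E) :
    wirtingerDeriv c (wirtingerDeriv c' u b) a x
      = (1/4 : ℂ) * (fderiv ℝ (fderiv ℝ u) x a b + c' * fderiv ℝ (fderiv ℝ u) x a (I • b)
          + c * fderiv ℝ (fderiv ℝ u) x (I • a) b
          + c * c' * fderiv ℝ (fderiv ℝ u) x (I • a) (I • b)) := by
  have hD : HasFDerivAt (fderiv ℝ u) (fderiv ℝ (fderiv ℝ u) x) x :=
    ((hu.fderiv_right (m := 1) le_rfl).differentiableAt one_ne_zero).hasFDerivAt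
  set D₂ := fderiv ℝ (fderiv ℝ u) x
  have hDw : ∀ w : E, HasFDerivAt (fun y => fderiv ℝ u y w) (D₂.flip w) x :=
    fun w => by simpa using hD.clm_apply (hasFDerivAt_const w x)
  have h : HasFDerivAt (wirtingerDeriv c' u b) ((1/2 : ℂ) • (D₂.flip b + c' • D₂.flip (I • b))) x :=
    ((hDw b).fun_add ((hDw (I • b)).const_mul c')).const_mul (1/2 : ℂ)
  rw [wirtingerDeriv, h.fderiv]
  simp only [smul_apply, add_apply, ContinuousLinearMap.flip_apply, smul_eq_mul]
  ring

theorem wirtingerDeriv_comm (hu : ContDiffAt ℝ 2 u x) (c c' : ℂ) (a b : E) :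
    wirtingerDeriv c (wirtingerDeriv c' u b) a x
      = wirtingerDeriv c' (wirtingerDeriv c u a) b x := by
  have hsymm : IsSymmSndFDerivAt ℝ u x :=
    hu.isSymmSndFDerivAt (by simp [minSmoothness_of_isRCLikeNormedField])
  rw [wirtingerDeriv_wirtingerDeriv hu, wirtingerDeriv_wirtingerDeriv hu, hsymm a b,
    hsymm a (I • b), hsymm (I • a) b, hsymm (I • a) (I • b)]
  ring

end Wirtinger

section Determinant

variable {ι : Type*} [Fintype ι] [DecidableEq ι]

theorem Matrix.det_updateRow_eq_sum_adjugate {R : Type*} [CommRing R] (A : Matrix ι ι R) (i : ι)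
    (b : ι → R) : (A.updateRow i b).det = ∑ j, A.adjugate j i * b j := by
  simp only [← Matrix.cramer_transpose_apply, Matrix.cramer_eq_adjugate_mulVec,
    ← Matrix.adjugate_transpose, Matrix.mulVec, dotProduct, Matrix.transpose_apply]

variable (ι) in
def Matrix.detContinuousMultilinearMap (𝕜 : Type*) [NormedField 𝕜] :
    ContinuousMultilinearMap 𝕜 (fun _ : ι => ι → 𝕜) 𝕜 :=
  ⟨Matrix.detRowAlternating.toMultilinearMap, continuous_id.matrix_det⟩

variable {𝕜 : Type*} [NontriviallyNormedField 𝕜] {𝕜' : Type*} [NontriviallyNormedField 𝕜']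
  [NormedAlgebra 𝕜 𝕜'] {E : Type*} [NormedAddCommGroup E] [NormedSpace 𝕜 E]
  {M : E → Matrix ι ι 𝕜'} {x : E}

theorem hasFDerivAt_det {M' : ι → ι → E →L[𝕜] 𝕜'}
    (h : ∀ i j, HasFDerivAt (fun y => M y i j) (M' i j) x) :
    HasFDerivAt (fun y => (M y).det) (∑ i, ∑ j, (M x).adjugate j i • M' i j) x := by
  have hM : HasFDerivAt (fun y i j => M y i j)
      (ContinuousLinearMap.pi fun i => ContinuousLinearMap.pi fun j => M' i j) x :=
    hasFDerivAt_pi.2 fun i => hasFDerivAt_pi.2 (h i)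
  refine (((Matrix.detContinuousMultilinearMap ι 𝕜').hasFDerivAt
    (fun i j => M x i j)).restrictScalars 𝕜 |>.comp x hM).congr_fderiv ?_
  ext e
  simp only [ContinuousLinearMap.comp_apply, ContinuousLinearMap.coe_restrictScalars',
    ContinuousMultilinearMap.linearDeriv_apply, ContinuousLinearMap.pi_apply, sum_apply,
    smul_apply, smul_eq_mul]
  exact Finset.sum_congr rfl fun i _ => Matrix.det_updateRow_eq_sum_adjugate (M x) i _

theorem differentiableAt_det (h : ∀ i j, DifferentiableAt 𝕜 (fun y => M y i j) x) :
    DifferentiableAt 𝕜 (fun y => (M y).det) x :=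
  (hasFDerivAt_det fun i j => (h i j).hasFDerivAt).differentiableAt

theorem differentiableAt_adjugate_apply (h : ∀ i j, DifferentiableAt 𝕜 (fun y => M y i j) x)
    (i j : ι) : DifferentiableAt 𝕜 (fun y => (M y).adjugate i j) x := by
  simp only [Matrix.adjugate_apply]
  refine differentiableAt_det fun k l => ?_
  by_cases hk : k = j
  · simp [Matrix.updateRow_apply, hk]
  · simpa [Matrix.updateRow_apply, hk] using h k l

theorem differentiableAt_inv_apply (h : ∀ i j, DifferentiableAt 𝕜 (fun y => M y i j) x)
    (hdet : (M x).det ≠ 0) (i j : ι) : DifferentiableAt 𝕜 (fun y => (M y)⁻¹ i j) x := by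
  simp only [Matrix.inv_def, Matrix.smul_apply, Ring.inverse_eq_inv', smul_eq_mul]
  exact ((differentiableAt_det h).inv hdet).mul (differentiableAt_adjugate_apply h i j)

end Determinant

section WirtingerMatrix

variable {E : Type*} [NormedAddCommGroup E] [NormedSpace ℂ E] {x : E}

theorem wirtingerDeriv_clog {u : E → ℂ} (hu : DifferentiableAt ℝ u x) (hx : u x ∈ slitPlane)
    (c : ℂ) (e : E) :
    wirtingerDeriv c (fun y => log (u y)) e x = (u x)⁻¹ * wirtingerDeriv c u e x := by
  have h : HasFDerivAt (fun y => log (u y)) _ x :=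
    ((hasStrictDerivAt_log hx).hasDerivAt.hasFDerivAt.restrictScalars ℝ).comp x hu.hasFDerivAt
  simp only [wirtingerDeriv, h.fderiv, ContinuousLinearMap.comp_apply,
    ContinuousLinearMap.coe_restrictScalars', ContinuousLinearMap.toSpanSingleton_apply,
    smul_eq_mul]
  ring

variable {ι : Type*} [Fintype ι] [DecidableEq ι] {M : E → Matrix ι ι ℂ}

theorem wirtingerDeriv_det (h : ∀ i j, DifferentiableAt ℝ (fun y => M y i j) x) (c : ℂ) (e : E) :
    wirtingerDeriv c (fun y => (M y).det) e x
      = ∑ i, ∑ j, (M x).adjugate j i * wirtingerDeriv c (fun y => M y i j) e x := by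
  simp only [wirtingerDeriv, (hasFDerivAt_det fun i j => (h i j).hasFDerivAt).fderiv, sum_apply,
    smul_apply, smul_eq_mul, Finset.mul_sum, ← Finset.sum_add_distrib]
  exact Finset.sum_congr rfl fun i _ => Finset.sum_congr rfl fun j _ => by ring

theorem wirtingerDeriv_log_det (h : ∀ i j, DifferentiableAt ℝ (fun y => M y i j) x)
    (hdet : 0 < (M x).det) (c : ℂ) (e : E) :
    wirtingerDeriv c (fun y => log (M y).det) e x
      = ∑ i, ∑ j, (M x)⁻¹ j i * wirtingerDeriv c (fun y => M y i j) e x := by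
  rw [wirtingerDeriv_clog (differentiableAt_det h) (mem_slitPlane_iff_not_le_zero.2 hdet.not_ge),
    wirtingerDeriv_det h, Matrix.inv_def]
  simp only [Matrix.smul_apply, Ring.inverse_eq_inv', smul_eq_mul, Finset.mul_sum, mul_assoc]

theorem wirtingerDeriv_inv_apply (h : ∀ i j, DifferentiableAt ℝ (fun y => M y i j) x)
    (hdet : (M x).det ≠ 0) (c : ℂ) (e : E) (j i : ι) :
    wirtingerDeriv c (fun y => (M y)⁻¹ j i) e x
      = -∑ k, ∑ s, (M x)⁻¹ j k * wirtingerDeriv c (fun y => M y k s) e x * (M x)⁻¹ s i := by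
  have hinv := differentiableAt_inv_apply h hdet
  set A := Matrix.of fun k s => wirtingerDeriv c (fun y => M y k s) e x
  set B := Matrix.of fun j i => wirtingerDeriv c (fun y => (M y)⁻¹ j i) e x
  have hprod : A * (M x)⁻¹ + M x * B = 0 := by
    ext j i
    have hone :
        (fun y => ∑ k, M y j k * (M y)⁻¹ k i) =ᶠ[𝓝 x] fun _ => (1 : Matrix ι ι ℂ) j i :=
      ((differentiableAt_det h).continuousAt.eventually_ne hdet).mono fun y hy => by
        show ∑ k, M y j k * (M y)⁻¹ k i = (1 : Matrix ι ι ℂ) j i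
        rw [← Matrix.mul_apply, Matrix.mul_nonsing_inv _ (isUnit_iff_ne_zero.2 hy)]
    have hW := wirtingerDeriv_congr hone c e
    rw [wirtingerDeriv_const, wirtingerDeriv_sum _ (fun k _ => (h j k).fun_mul (hinv k i))] at hW
    simpa only [wirtingerDeriv_mul (h j _) (hinv _ i), Finset.sum_add_distrib, A, B,
      Matrix.add_apply, Matrix.mul_apply, Matrix.of_apply, Matrix.zero_apply] using hW
  have hB : B = -((M x)⁻¹ * A * (M x)⁻¹) := by
    calc B = (M x)⁻¹ * (M x * B) := by
          rw [← Matrix.mul_assoc, Matrix.nonsing_inv_mul _ (isUnit_iff_ne_zero.2 hdet),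
            Matrix.one_mul]
      _ = -((M x)⁻¹ * A * (M x)⁻¹) := by
          rw [eq_neg_of_add_eq_zero_right hprod, Matrix.mul_neg, Matrix.mul_assoc]
  have hBji := congrFun (congrFun hB j) i
  simp only [A, B, Matrix.of_apply, Matrix.neg_apply, Matrix.mul_apply, Finset.sum_mul] at hBji
  rw [hBji, Finset.sum_comm]

end WirtingerMatrix

section SecondOrder

variable {E : Type*} [NormedAddCommGroup E] [NormedSpace ℂ E] {Ω : Set E} {x : E}

theorem eqOn_wirtingerDeriv_comm (hΩ : IsOpen Ω) {u : E → ℂ} (hu : ContDiffOn ℝ (⊤ : ℕ∞) u Ω)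
    (c c' : ℂ) (a b : E) :
    Set.EqOn (wirtingerDeriv c (wirtingerDeriv c' u b) a)
      (wirtingerDeriv c' (wirtingerDeriv c u a) b) Ω := fun _ hy =>
  wirtingerDeriv_comm ((hu.contDiffAt (hΩ.mem_nhds hy)).of_le (WithTop.coe_le_coe.2 le_top))
    c c' a b

theorem wirtingerDeriv_wirtingerDeriv_comm (hΩ : IsOpen Ω) {u : E → ℂ}
    (hu : ContDiffOn ℝ (⊤ : ℕ∞) u Ω) (hx : x ∈ Ω) (c₁ c₂ c₃ c₄ : ℂ) (e₁ e₂ e₃ e₄ : E) :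
    wirtingerDeriv c₁ (wirtingerDeriv c₂ (wirtingerDeriv c₃ (wirtingerDeriv c₄ u e₄) e₃) e₂) e₁ x
      = wirtingerDeriv c₃ (wirtingerDeriv c₄ (wirtingerDeriv c₁ (wirtingerDeriv c₂ u e₂) e₁) e₄) e₃
          x := by
  have hu₂ := hu.wirtingerDeriv hΩ c₂ e₂
  have hu₄ := hu.wirtingerDeriv hΩ c₄ e₄
  calc _ = wirtingerDeriv c₁ (wirtingerDeriv c₃ (wirtingerDeriv c₂ (wirtingerDeriv c₄ u e₄) e₂) e₃)
          e₁ x := (eqOn_wirtingerDeriv_comm hΩ hu₄ c₂ c₃ e₂ e₃).wirtingerDeriv hΩ c₁ e₁ hx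
    _ = wirtingerDeriv c₃ (wirtingerDeriv c₁ (wirtingerDeriv c₂ (wirtingerDeriv c₄ u e₄) e₂) e₁)
          e₃ x := eqOn_wirtingerDeriv_comm hΩ (hu₄.wirtingerDeriv hΩ c₂ e₂) c₁ c₃ e₁ e₃ hx
    _ = wirtingerDeriv c₃ (wirtingerDeriv c₁ (wirtingerDeriv c₄ (wirtingerDeriv c₂ u e₂) e₄) e₁)
          e₃ x :=
      (((eqOn_wirtingerDeriv_comm hΩ hu c₂ c₄ e₂ e₄).wirtingerDeriv hΩ c₁ e₁).wirtingerDeriv hΩ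
        c₃ e₃) hx
    _ = _ := (eqOn_wirtingerDeriv_comm hΩ hu₂ c₁ c₄ e₁ e₄).wirtingerDeriv hΩ c₃ e₃ hx

theorem Complex.ofReal_log_re_of_pos {z : ℂ} (hz : 0 < z) : (Real.log z.re : ℂ) = log z := by
  obtain ⟨hre, him⟩ := Complex.pos_iff.1 hz
  rw [Complex.ofReal_log hre.le]
  congr
  exact Complex.ext (by simp) (by simpa using him)

variable {ι : Type*} [Fintype ι] [DecidableEq ι] {M : E → Matrix ι ι ℂ}

theorem wirtingerDeriv_wirtingerDeriv_log_det (hΩ : IsOpen Ω)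
    (hM : ∀ i j, ContDiffOn ℝ (⊤ : ℕ∞) (fun y => M y i j) Ω) (hdet : ∀ y ∈ Ω, 0 < (M y).det)
    (hx : x ∈ Ω) (c c' : ℂ) (a b : E) :
    wirtingerDeriv c (wirtingerDeriv c' (fun y => (Real.log (M y).det.re : ℂ)) b) a x
      = ∑ i, ∑ j, (M x)⁻¹ j i * wirtingerDeriv c (wirtingerDeriv c' (fun y => M y i j) b) a x
        - ∑ i, ∑ j, ∑ k, ∑ s, (M x)⁻¹ s i * (M x)⁻¹ j k * wirtingerDeriv c (fun y => M y k s) a x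
            * wirtingerDeriv c' (fun y => M y i j) b x := by
  have hdiff : ∀ {v : E → ℂ}, ContDiffOn ℝ (⊤ : ℕ∞) v Ω → ∀ y ∈ Ω, DifferentiableAt ℝ v y :=
    fun hv y hy => (hv.contDiffAt (hΩ.mem_nhds hy)).differentiableAt (by simp)
  have hfirst : Set.EqOn (wirtingerDeriv c' (fun y => (Real.log (M y).det.re : ℂ)) b)
      (fun y => ∑ i, ∑ j, (M y)⁻¹ j i * wirtingerDeriv c' (fun y => M y i j) b y) Ω := by
    intro y hy
    have hlog : (fun y => (Real.log (M y).det.re : ℂ)) =ᶠ[𝓝 y] fun y => log (M y).det :=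
      Filter.eventually_of_mem (hΩ.mem_nhds hy) fun z hz => ofReal_log_re_of_pos (hdet z hz)
    rw [wirtingerDeriv_congr hlog,
      wirtingerDeriv_log_det (fun i j => hdiff (hM i j) y hy) (hdet y hy)]
  have hMx : ∀ i j, DifferentiableAt ℝ (fun y => M y i j) x := fun i j => hdiff (hM i j) x hx
  have hinv := differentiableAt_inv_apply hMx (hdet x hx).ne'
  have hM' : ∀ i j, DifferentiableAt ℝ (wirtingerDeriv c' (fun y => M y i j) b) x :=
    fun i j => hdiff ((hM i j).wirtingerDeriv hΩ c' b) x hx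
  rw [wirtingerDeriv_congr (hfirst.eventuallyEq_of_mem (hΩ.mem_nhds hx)),
    wirtingerDeriv_sum _ fun i _ =>
      DifferentiableAt.fun_sum fun j _ => (hinv j i).fun_mul (hM' i j)]
  simp only [wirtingerDeriv_sum _ fun j _ => (hinv j _).fun_mul (hM' _ j),
    wirtingerDeriv_mul (hinv _ _) (hM' _ _), wirtingerDeriv_inv_apply hMx (hdet x hx).ne']
  simp only [neg_mul, Finset.sum_mul, neg_add_eq_sub, Finset.sum_sub_distrib]
  congr! 6 with i _ j _ k _ s _
  ring

end SecondOrder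

theorem equation23_general (n : ℕ) (Ω : Set (Etz n)) (hΩ : IsOpen Ω)
    (Φ : Etz n → ℝ) (hΦ : ContDiffOn ℝ (⊤ : ℕ∞) Φ Ω)
    (hpos : ∀ x ∈ Ω, (gmet Φ x).PosDef) :
    ∀ x ∈ Ω,
      -(∑ i, ∑ j, ginv Φ x j i *
          wD (wDbar (wD (wDbar (fun p => (Φ p : ℂ)) (dt n)) (dt n)) (dz n j)) (dz n i) x)
        = -(wD (wDbar (fun y => (Real.log ((gmet Φ y).det.re) : ℂ)) (dt n)) (dt n) x)
          - ∑ i, ∑ j, ∑ k, ∑ s, ginv Φ x s i * ginv Φ x j k *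
              wD (fun y => gmet Φ y k s) (dt n) x * wDbar (fun y => gmet Φ y i j) (dt n) x := by
  intro x hx
  have hf : ContDiffOn ℝ (⊤ : ℕ∞) (fun p => (Φ p : ℂ)) Ω := ofRealCLM.contDiff.comp_contDiffOn hΦ
  have hg : ∀ i j, (fun y => gmet Φ y i j)
      = wirtingerDeriv (-I) (wirtingerDeriv I (fun p => (Φ p : ℂ)) (dz n j)) (dz n i) := by
    intro i j
    simp only [gmet, Matrix.of_apply, wD_eq_wirtingerDeriv, wDbar_eq_wirtingerDeriv]
  have hg_smooth : ∀ i j, ContDiffOn ℝ (⊤ : ℕ∞) (fun y => gmet Φ y i j) Ω := fun i j =>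
    hg i j ▸ (hf.wirtingerDeriv hΩ I _).wirtingerDeriv hΩ (-I) _
  simp only [ginv, wD_eq_wirtingerDeriv, wDbar_eq_wirtingerDeriv,
    wirtingerDeriv_wirtingerDeriv_comm hΩ hf hx (-I) I, ← hg,
    wirtingerDeriv_wirtingerDeriv_log_det hΩ hg_smooth (fun y hy => (hpos y hy).det_pos) hx]
  ring

/-- **Equation (23).** For a smooth potential `Φ` on `Ω ⊆ ℂ × ℂⁿ` whose fiberwise complex
Hessian `g` is positive definite on `Ω`,
`-Σ g^{j̄i} ∂²(∂²Φ/∂t∂t̄)/∂z^i∂z̄^j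
   = -∂²(log det g)/∂t∂t̄ - Σ g^{s̄i} g^{j̄k} (∂g_{ks̄}/∂t)(∂g_{ij̄}/∂t̄)`. -/
theorem equation23 (n : ℕ) (hn : 1 ≤ n) (Ω : Set (Etz n)) (hΩ : IsOpen Ω)
    (Φ : Etz n → ℝ) (hΦ : ContDiffOn ℝ (⊤ : ℕ∞) Φ Ω)
    (hpos : ∀ x ∈ Ω, (gmet Φ x).PosDef) :
    ∀ x ∈ Ω,
      -(∑ i, ∑ j, ginv Φ x j i *
          wD (wDbar (wD (wDbar (fun p => (Φ p : ℂ)) (dt n)) (dt n)) (dz n j)) (dz n i) x)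
        = -(wD (wDbar (fun y => (Real.log ((gmet Φ y).det.re) : ℂ)) (dt n)) (dt n) x)
          - ∑ i, ∑ j, ∑ k, ∑ s, ginv Φ x s i * ginv Φ x j k *
              wD (fun y => gmet Φ y k s) (dt n) x * wDbar (fun y => gmet Φ y i j) (dt n) x :=
  equation23_general n Ω hΩ Φ hΦ hpos

end
end

section
/- Let n ≥ 1 and let Ω be an open subset of ℂ × ℂⁿ with coordinates (t, z¹, …, zⁿ). Let Φ : Ω → ℝ be a C^∞ function; set g_{ij̄} := ∂²Φ/∂z^i∂z̄^j (1 ≤ i, j ≤ n) and assume g := (g_{ij̄}) is positive definite at every point of Ω; let (g^{j̄i}) denote the entries of g⁻¹. Let ψ : Ω → ℝ be C^∞ with log det g = Φ − ψ on Ω, and write g_{tᾱ} := ∂²Φ/∂t∂z̄^α, g_{γt̄} := ∂²Φ/∂z^γ∂t̄. Suppose that at p₀ ∈ Ω all first-order derivatives ∂g_{ij̄}/∂z^k (p₀) vanish. Then at p₀: Σ_{i,j,α,γ} g^{j̄i} g^{ᾱγ} g_{tᾱ} · ∂²(g_{γt̄})/∂z^i∂z̄^j = Σ_{α,γ} g_{tᾱ}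 g^{ᾱγ} ( g_{γt̄} − ∂²ψ/∂z^γ∂t̄ ). -/
/-!
At a point where the first `z`-derivatives of `g` vanish, the inverse matrix `g⁻¹` is stationary
in the `z`-directions as well. Differentiating Jacobi's formula `∂_{t̄} log det g = tr(g⁻¹ ∂_{t̄} g)`
once more in `z^γ` therefore gives `∂_γ ∂_{t̄} log det g = Σ g^{j̄i} ∂_γ ∂_{t̄} g_{ij̄}`, and by the
Monge–Ampère equation the left side is `g_{γt̄} - ∂_γ ∂_{t̄} ψ`. Since Wirtinger derivatives of
the smooth function `Φ` commute, `∂_γ ∂_{t̄} g_{ij̄} = ∂_i ∂_{j̄} g_{γt̄}`; contracting with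
`g_{tᾱ} g^{ᾱγ}` gives the claim.
-/

open Complex
open scoped ComplexOrder

noncomputable section

open Filter Set Topology

theorem Finset.sum_comm_pairs {ι κ M : Type*} [AddCommMonoid M] (s : Finset ι) (t : Finset κ)
    (f : ι → ι → κ → κ → M) :
    ∑ i ∈ s, ∑ j ∈ s, ∑ k ∈ t, ∑ l ∈ t, f i j k l =
      ∑ k ∈ t, ∑ l ∈ t, ∑ i ∈ s, ∑ j ∈ s, f i j k l :=
  calc _ = ∑ i ∈ s, ∑ k ∈ t, ∑ j ∈ s, ∑ l ∈ t, f i j k l := sum_congr rfl fun _ _ => sum_comm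
    _ = ∑ k ∈ t, ∑ i ∈ s, ∑ l ∈ t, ∑ j ∈ s, f i j k l :=
      sum_comm.trans (sum_congr rfl fun _ _ => sum_congr rfl fun _ _ => sum_comm)
    _ = _ := sum_congr rfl fun _ _ => sum_comm

theorem Complex.log_eq_ofReal_log_re {z : ℂ} (hz : 0 < z) : log z = Real.log z.re := by
  rw [ofReal_log (pos_iff.1 hz).1.le, ← eq_re_of_ofReal_le (r := 0) (by simpa using hz.le)]

theorem Complex.mem_slitPlane_of_pos {z : ℂ} (hz : 0 < z) : z ∈ slitPlane :=
  mem_slitPlane_iff.2 (Or.inl (pos_iff.1 hz).1)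

theorem fderiv_fderiv_apply_comm {E F : Type*} [NormedAddCommGroup E] [NormedSpace ℝ E]
    [NormedAddCommGroup F] [NormedSpace ℝ F] {u : E → F} {x : E} (hu : ContDiffAt ℝ 2 u x)
    (a b : E) :
    fderiv ℝ (fun y => fderiv ℝ u y b) x a = fderiv ℝ (fun y => fderiv ℝ u y a) x b := by
  have hdiff : DifferentiableAt ℝ (fderiv ℝ u) x :=
    (hu.fderiv_right (m := 1) le_rfl).differentiableAt one_ne_zero
  rw [fderiv_clm_apply hdiff (differentiableAt_const b),
    fderiv_clm_apply hdiff (differentiableAt_const a)]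
  simpa using (hu.isSymmSndFDerivAt (by simp)).eq a b

section Wirtinger

variable {E F H : Type*} [NormedAddCommGroup E] [NormedSpace ℂ E]
  [NormedAddCommGroup F] [NormedSpace ℂ F] [NormedAddCommGroup H] [NormedSpace ℂ H]

/-- `wirtinger (-1)` is `∂/∂w` and `wirtinger 1` is `∂/∂w̄`, for vector-valued functions. -/
def wirtinger (c : ℂ) (u : E → F) (e x : E) : F :=
  (1 / 2 : ℂ) • (fderiv ℝ u x e + (c * I) • fderiv ℝ u x (I • e))

theorem wD_eq_wirtinger (u : E → ℂ) (e : E) : wD u e = wirtinger (-1) u e := by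
  funext x
  simp only [wD, wirtinger, smul_eq_mul]
  ring

theorem wDbar_eq_wirtinger (u : E → ℂ) (e : E) : wDbar u e = wirtinger 1 u e := by
  funext x
  simp only [wDbar, wirtinger, smul_eq_mul]
  ring

variable {c : ℂ} {u v : E → F} {e x : E} {Ω : Set E}

theorem wirtinger_congr_of_eventuallyEq (h : u =ᶠ[𝓝 x] v) :
    wirtinger c u e x = wirtinger c v e x := by
  simp only [wirtinger, h.fderiv_eq]

theorem Set.EqOn.wirtinger (h : EqOn u v Ω) (hΩ : IsOpen Ω) :
    EqOn (wirtinger c u e) (wirtinger c v e) Ω := fun _ hx =>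
  wirtinger_congr_of_eventuallyEq (h.eventuallyEq_of_mem (hΩ.mem_nhds hx))

theorem wirtinger_comp {f : F → H} (hf : DifferentiableAt ℂ f (u x))
    (hu : DifferentiableAt ℝ u x) :
    wirtinger c (fun y => f (u y)) e x = fderiv ℂ f (u x) (wirtinger c u e x) := by
  have : fderiv ℝ (fun y => f (u y)) x = (fderiv ℂ f (u x)).restrictScalars ℝ ∘L fderiv ℝ u x := by
    rw [← hf.fderiv_restrictScalars ℝ]
    exact fderiv_comp (𝕜 := ℝ) x (hf.restrictScalars ℝ) hu
  simp [wirtinger, this]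

theorem wirtinger_apply {ι : Type*} [Fintype ι] {v : E → ι → F} (hv : DifferentiableAt ℝ v x)
    (i : ι) : wirtinger c (fun y => v y i) e x = wirtinger c v e x i := by
  rw [wirtinger_comp (f := fun w => w i) (differentiableAt_apply i _) hv,
    (hasFDerivAt_apply i (v x)).fderiv]
  rfl

theorem wirtinger_apply_apply {ι κ : Type*} [Fintype ι] [Fintype κ] {v : E → ι → κ → F}
    (hv : DifferentiableAt ℝ v x) (i : ι) (j : κ) :
    wirtinger c (fun y => v y i j) e x = wirtinger c v e x i j := by
  rw [wirtinger_apply (differentiableAt_pi.1 hv i), wirtinger_apply hv]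

theorem wirtinger_sub (hu : DifferentiableAt ℝ u x) (hv : DifferentiableAt ℝ v x) :
    wirtinger c (fun y => u y - v y) e x = wirtinger c u e x - wirtinger c v e x := by
  simp only [wirtinger, fderiv_fun_sub hu hv, sub_apply]
  module

theorem wirtinger_sum {ι : Type*} {s : Finset ι} {f : ι → E → F}
    (hf : ∀ i ∈ s, DifferentiableAt ℝ (f i) x) :
    wirtinger c (fun y => ∑ i ∈ s, f i y) e x = ∑ i ∈ s, wirtinger c (f i) e x := by
  simp only [wirtinger, fderiv_fun_sum hf, sum_apply, Finset.smul_sum, ← Finset.sum_add_distrib,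
    smul_add]

theorem wirtinger_mul {u v : E → ℂ} (hu : DifferentiableAt ℝ u x) (hv : DifferentiableAt ℝ v x) :
    wirtinger c (fun y => u y * v y) e x = wirtinger c u e x * v x + u x * wirtinger c v e x := by
  simp only [wirtinger, fderiv_fun_mul hu hv, add_apply, smul_apply, smul_eq_mul]
  ring

theorem ContDiffOn.wirtinger {m n : WithTop ℕ∞} (hu : ContDiffOn ℝ n u Ω) (hΩ : IsOpen Ω)
    (hmn : m + 1 ≤ n) : ContDiffOn ℝ m (wirtinger c u e) Ω := by
  have hD : ∀ e', ContDiffOn ℝ m (fun y => fderiv ℝ u y e') Ω := fun e' =>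
    (hu.fderiv_of_isOpen hΩ hmn).clm_apply contDiffOn_const
  exact contDiffOn_const.smul ((hD e).add (contDiffOn_const.smul (hD _)))

theorem fderiv_wirtinger_apply (hu : ContDiffAt ℝ 2 u x) (a b : E) :
    fderiv ℝ (wirtinger c u b) x a = (1 / 2 : ℂ) • (fderiv ℝ (fun y => fderiv ℝ u y b) x a
      + (c * I) • fderiv ℝ (fun y => fderiv ℝ u y (I • b)) x a) := by
  have hD : ∀ e', DifferentiableAt ℝ (fun y => fderiv ℝ u y e') x := fun e' =>
    ((hu.fderiv_right (m := 1) le_rfl).differentiableAt one_ne_zero).clm_apply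
      (differentiableAt_const e')
  exact congrArg (· a)
    (((hD b).hasFDerivAt.add ((hD (I • b)).hasFDerivAt.const_smul (c * I))).const_smul
      (1 / 2 : ℂ)).fderiv

theorem wirtinger_comm (hu : ContDiffAt ℝ 2 u x) (c' : ℂ) (a b : E) :
    wirtinger c (wirtinger c' u b) a x = wirtinger c' (wirtinger c u a) b x := by
  simp only [wirtinger, fderiv_wirtinger_apply hu, fderiv_fderiv_apply_comm hu a,
    fderiv_fderiv_apply_comm hu (I • a)]
  module

theorem wirtinger_wirtinger_sub (hu : ContDiffOn ℝ 2 u Ω) (hv : ContDiffOn ℝ 2 v Ω)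
    (hΩ : IsOpen Ω) (hx : x ∈ Ω) (c' : ℂ) (a b : E) :
    wirtinger c (wirtinger c' (fun y => u y - v y) b) a x =
      wirtinger c (wirtinger c' u b) a x - wirtinger c (wirtinger c' v b) a x := by
  have hsub : EqOn (wirtinger c' (fun y => u y - v y) b)
      (fun y => wirtinger c' u b y - wirtinger c' v b y) Ω := fun y hy =>
    wirtinger_sub ((hu.contDiffAt (hΩ.mem_nhds hy)).differentiableAt two_ne_zero)
      ((hv.contDiffAt (hΩ.mem_nhds hy)).differentiableAt two_ne_zero)
  rw [hsub.wirtinger hΩ hx, wirtinger_sub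
    (((hu.wirtinger hΩ (m := 1) le_rfl).contDiffAt (hΩ.mem_nhds hx)).differentiableAt one_ne_zero)
    (((hv.wirtinger hΩ (m := 1) le_rfl).contDiffAt (hΩ.mem_nhds hx)).differentiableAt one_ne_zero)]

theorem eqOn_wirtinger_comm (hu : ContDiffOn ℝ 2 u Ω) (hΩ : IsOpen Ω) (c' : ℂ) (a b : E) :
    EqOn (wirtinger c (wirtinger c' u b) a) (wirtinger c' (wirtinger c u a) b) Ω := fun _ hx =>
  wirtinger_comm (hu.contDiffAt (hΩ.mem_nhds hx)) c' a b

theorem wirtinger_pair_comm (hu : ContDiffOn ℝ 4 u Ω) (hΩ : IsOpen Ω) (hx : x ∈ Ω)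
    (c₁ c₂ c₃ c₄ : ℂ) (e₁ e₂ e₃ e₄ : E) :
    wirtinger c₁ (wirtinger c₂ (wirtinger c₃ (wirtinger c₄ u e₄) e₃) e₂) e₁ x =
      wirtinger c₃ (wirtinger c₄ (wirtinger c₁ (wirtinger c₂ u e₂) e₁) e₄) e₃ x := by
  have hu₄ : ContDiffOn ℝ 3 (wirtinger c₄ u e₄) Ω := hu.wirtinger hΩ (by norm_num)
  have hu₂ : ContDiffOn ℝ 3 (wirtinger c₂ u e₂) Ω := hu.wirtinger hΩ (by norm_num)
  have hu₂₄ : ContDiffOn ℝ 2 (wirtinger c₂ (wirtinger c₄ u e₄) e₂) Ω :=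
    hu₄.wirtinger hΩ (by norm_num)
  calc _ = wirtinger c₁ (wirtinger c₃ (wirtinger c₂ (wirtinger c₄ u e₄) e₂) e₃) e₁ x :=
        (eqOn_wirtinger_comm (hu₄.of_le (by norm_num)) hΩ c₃ e₂ e₃).wirtinger hΩ hx
    _ = wirtinger c₃ (wirtinger c₁ (wirtinger c₂ (wirtinger c₄ u e₄) e₂) e₁) e₃ x :=
        eqOn_wirtinger_comm hu₂₄ hΩ c₃ e₁ e₃ hx
    _ = wirtinger c₃ (wirtinger c₁ (wirtinger c₄ (wirtinger c₂ u e₂) e₄) e₁) e₃ x :=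
        ((eqOn_wirtinger_comm (hu.of_le (by norm_num)) hΩ c₄ e₂ e₄).wirtinger hΩ).wirtinger hΩ hx
    _ = _ := ((eqOn_wirtinger_comm (hu₂.of_le (by norm_num)) hΩ c₄ e₁ e₄).wirtinger hΩ) hx

end Wirtinger

section Determinant

variable {𝕜 : Type*} [NontriviallyNormedField 𝕜] {m : Type*} [Fintype m] [DecidableEq m]

theorem Matrix.det_updateRow_eq_sum_mul_adjugate {R : Type*} [CommRing R] (A : Matrix m m R)
    (i : m) (b : m → R) : (A.updateRow i b).det = ∑ j, b j * A.adjugate j i := by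
  rw [← cramer_transpose_apply, cramer_eq_adjugate_mulVec, ← adjugate_transpose]
  simp [Matrix.mulVec, dotProduct, mul_comm]

variable (𝕜 m) in
def Matrix.detContinuousMultilinear : ContinuousMultilinearMap 𝕜 (fun _ : m => m → 𝕜) 𝕜 :=
  { (Matrix.detRowAlternating : (m → 𝕜) [⋀^m]→ₗ[𝕜] 𝕜).toMultilinearMap with
    cont := (continuous_id (X := Matrix m m 𝕜)).matrix_det }

theorem hasFDerivAt_det_s12 (A : m → m → 𝕜) :
    HasFDerivAt (fun A : m → m → 𝕜 => (Matrix.of A).det)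
      ((Matrix.detContinuousMultilinear 𝕜 m).linearDeriv A) A :=
  (Matrix.detContinuousMultilinear 𝕜 m).hasFDerivAt A

theorem differentiable_det : Differentiable 𝕜 fun A : m → m → 𝕜 => (Matrix.of A).det :=
  fun A => (hasFDerivAt_det_s12 A).differentiableAt

theorem fderiv_det_apply (A B : m → m → 𝕜) :
    fderiv 𝕜 (fun A : m → m → 𝕜 => (Matrix.of A).det) A B =
      ∑ i, ∑ j, B i j * (Matrix.of A).adjugate j i := by
  rw [(hasFDerivAt_det_s12 A).fderiv, ContinuousMultilinearMap.linearDeriv_apply]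
  exact Finset.sum_congr rfl fun i _ => Matrix.det_updateRow_eq_sum_mul_adjugate _ i (B i)

theorem differentiableAt_matrix_inv_apply {A : m → m → 𝕜} (hA : (Matrix.of A).det ≠ 0)
    (i j : m) : DifferentiableAt 𝕜 (fun B : m → m → 𝕜 => (Matrix.of B)⁻¹ i j) A := by
  have hupdate : Differentiable 𝕜 fun B : m → m → 𝕜 => Function.update B j (Pi.single i 1) :=
    differentiable_pi.2 fun k => by
      by_cases hk : k = j
      · simp [hk]
      · simpa [Function.update_of_ne hk] using differentiable_apply k
  simp only [Matrix.inv_def, Ring.inverse_eq_inv', Matrix.smul_apply, Matrix.adjugate_apply,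
    smul_eq_mul]
  exact (differentiable_det A |>.inv hA).mul (differentiable_det.comp hupdate A)

end Determinant

section LogDet

variable {E : Type*} [NormedAddCommGroup E] [NormedSpace ℂ E] {m : Type*} [Fintype m]
  [DecidableEq m] {G : E → m → m → ℂ} {Ω : Set E} {x : E}

theorem wirtinger_det (hG : DifferentiableAt ℝ G x) (c : ℂ) (e : E) :
    wirtinger c (fun y => (Matrix.of (G y)).det) e x =
      ∑ i, ∑ j, wirtinger c G e x i j * (Matrix.of (G x)).adjugate j i := by
  rw [wirtinger_comp (differentiable_det _) hG, fderiv_det_apply]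

theorem wirtinger_log_det (hG : DifferentiableAt ℝ G x)
    (hdet : (Matrix.of (G x)).det ∈ slitPlane) (c : ℂ) (e : E) :
    wirtinger c (fun y => log (Matrix.of (G y)).det) e x =
      ∑ i, ∑ j, wirtinger c G e x i j * (Matrix.of (G x))⁻¹ j i := by
  have hdetG : DifferentiableAt ℝ (fun y => (Matrix.of (G y)).det) x :=
    ((differentiable_det (G x)).restrictScalars ℝ).comp
      (g := fun A : m → m → ℂ => (Matrix.of A).det) x hG
  rw [wirtinger_comp (u := fun y => (Matrix.of (G y)).det) (differentiableAt_log hdet) hdetG,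
    (hasStrictDerivAt_log hdet).hasDerivAt.hasFDerivAt.fderiv, wirtinger_det hG]
  simp [Matrix.inv_def, Ring.inverse_eq_inv', mul_assoc, mul_comm]

theorem wirtinger_matrix_inv_apply_eq_zero (hG : DifferentiableAt ℝ G x)
    (hdet : (Matrix.of (G x)).det ≠ 0) {c : ℂ} {e : E} (hGx : wirtinger c G e x = 0) (i j : m) :
    wirtinger c (fun y => (Matrix.of (G y))⁻¹ i j) e x = 0 := by
  rw [wirtinger_comp (differentiableAt_matrix_inv_apply hdet i j) hG, hGx, map_zero]

theorem wirtinger_wirtinger_log_det (hG : ContDiffOn ℝ 2 G Ω) (hΩ : IsOpen Ω)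
    (hdet : ∀ y ∈ Ω, (Matrix.of (G y)).det ∈ slitPlane) (hx : x ∈ Ω) {c c' : ℂ} {a b : E}
    (hGx : wirtinger c G a x = 0) :
    wirtinger c (wirtinger c' (fun y => log (Matrix.of (G y)).det) b) a x =
      ∑ i, ∑ j, wirtinger c (wirtinger c' (fun y => G y i j) b) a x * (Matrix.of (G x))⁻¹ j i := by
  have hGd : ∀ y ∈ Ω, DifferentiableAt ℝ G y := fun y hy =>
    (hG.contDiffAt (hΩ.mem_nhds hy)).differentiableAt two_ne_zero
  have hW : ∀ i j, DifferentiableAt ℝ (wirtinger c' (fun y => G y i j) b) x := fun i j =>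
    (((contDiffOn_pi.1 (contDiffOn_pi.1 hG i) j).wirtinger hΩ (m := 1) (by norm_num)).contDiffAt
      (hΩ.mem_nhds hx)).differentiableAt one_ne_zero
  have hinv : ∀ i j, DifferentiableAt ℝ (fun y => (Matrix.of (G y))⁻¹ j i) x := fun i j =>
    ((differentiableAt_matrix_inv_apply (slitPlane_ne_zero (hdet x hx)) j i).restrictScalars
      ℝ).comp x (hGd x hx)
  have hfirst : EqOn (wirtinger c' (fun y => log (Matrix.of (G y)).det) b)
      (fun y => ∑ i, ∑ j, wirtinger c' (fun y => G y i j) b y * (Matrix.of (G y))⁻¹ j i) Ω := by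
    intro y hy
    rw [wirtinger_log_det (hGd y hy) (hdet y hy)]
    refine Finset.sum_congr rfl fun i _ => Finset.sum_congr rfl fun j _ => ?_
    rw [wirtinger_apply_apply (hGd y hy)]
  rw [hfirst.wirtinger hΩ hx, wirtinger_sum fun i _ =>
    DifferentiableAt.fun_sum fun j _ => (hW i j).fun_mul (hinv i j)]
  refine Finset.sum_congr rfl fun i _ => ?_
  rw [wirtinger_sum fun j _ => (hW i j).fun_mul (hinv i j)]
  refine Finset.sum_congr rfl fun j _ => ?_
  rw [wirtinger_mul (hW i j) (hinv i j),
    wirtinger_matrix_inv_apply_eq_zero (hGd x hx) (slitPlane_ne_zero (hdet x hx)) hGx, mul_zero,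
    add_zero]

end LogDet

theorem gmet_apply_eq_wirtinger {n : ℕ} (Φ : Etz n → ℝ) (i j : Fin n) :
    (fun y => gmet Φ y i j) = wirtinger (-1) (wirtinger 1 (fun p => (Φ p : ℂ)) (dz n j)) (dz n i) := by
  funext y
  simp [gmet, wD_eq_wirtinger, wDbar_eq_wirtinger]

theorem contDiffOn_gmet {n : ℕ} {Φ : Etz n → ℝ} {Ω : Set (Etz n)} (hΩ : IsOpen Ω)
    (hΦ : ContDiffOn ℝ 4 (fun p => (Φ p : ℂ)) Ω) : ContDiffOn ℝ 2 (fun y i j => gmet Φ y i j) Ω :=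
  contDiffOn_pi.2 fun i => contDiffOn_pi.2 fun j => by
    simpa only [gmet_apply_eq_wirtinger] using
      (hΦ.wirtinger hΩ (m := 3) (by norm_num)).wirtinger hΩ (by norm_num)

theorem sum_wirtinger_wirtinger_mul_ginv {n : ℕ} {Ω : Set (Etz n)} (hΩ : IsOpen Ω)
    {Φ ψ : Etz n → ℝ} (hΦ : ContDiffOn ℝ 4 (fun p => (Φ p : ℂ)) Ω)
    (hψ : ContDiffOn ℝ 2 (fun p => (ψ p : ℂ)) Ω) (hpos : ∀ x ∈ Ω, (gmet Φ x).PosDef)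
    (hMA : ∀ x ∈ Ω, Real.log ((gmet Φ x).det.re) = Φ x - ψ x) {p₀ : Etz n} (hp₀ : p₀ ∈ Ω)
    (hgeo : ∀ i j k : Fin n, wD (fun y => gmet Φ y i j) (dz n k) p₀ = 0) (γ : Fin n) :
    ∑ i, ∑ j, wirtinger (-1) (wirtinger 1 (wirtinger (-1)
        (wirtinger 1 (fun p => (Φ p : ℂ)) (dt n)) (dz n γ)) (dz n j)) (dz n i) p₀ * ginv Φ p₀ j i =
      wirtinger (-1) (wirtinger 1 (fun p => (Φ p : ℂ)) (dt n)) (dz n γ) p₀ -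
        wirtinger (-1) (wirtinger 1 (fun p => (ψ p : ℂ)) (dt n)) (dz n γ) p₀ := by
  have hg := contDiffOn_gmet hΩ hΦ
  have hg_geo : wirtinger (-1) (fun y i j => gmet Φ y i j) (dz n γ) p₀ = 0 := by
    funext i j
    rw [← wirtinger_apply_apply ((hg.contDiffAt (hΩ.mem_nhds hp₀)).differentiableAt two_ne_zero),
      ← wD_eq_wirtinger, hgeo, Pi.zero_apply, Pi.zero_apply]
  have hlog : EqOn (fun y => log (gmet Φ y).det) (fun y => (Φ y : ℂ) - ψ y) Ω := fun y hy => by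
    dsimp only
    rw [log_eq_ofReal_log_re (hpos y hy).det_pos, hMA y hy, ofReal_sub]
  calc _ = ∑ i, ∑ j, wirtinger (-1) (wirtinger 1 (fun y => gmet Φ y i j) (dt n)) (dz n γ) p₀ *
        (Matrix.of fun i j => gmet Φ p₀ i j)⁻¹ j i :=
      Finset.sum_congr rfl fun i _ => Finset.sum_congr rfl fun j _ => by
        rw [gmet_apply_eq_wirtinger, wirtinger_pair_comm hΦ hΩ hp₀]
        rfl
    _ = wirtinger (-1) (wirtinger 1 (fun y => log (gmet Φ y).det) (dt n)) (dz n γ) p₀ :=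
      (wirtinger_wirtinger_log_det hg hΩ (fun y hy => mem_slitPlane_of_pos (hpos y hy).det_pos)
        hp₀ hg_geo).symm
    _ = _ := by
      rw [(hlog.wirtinger hΩ).wirtinger hΩ hp₀,
        wirtinger_wirtinger_sub (hΦ.of_le (by norm_num)) hψ hΩ hp₀]

theorem evaluation_I2_general (n : ℕ) (Ω : Set (Etz n)) (hΩ : IsOpen Ω)
    (Φ : Etz n → ℝ) (hΦ : ContDiffOn ℝ (⊤ : ℕ∞) Φ Ω)
    (hpos : ∀ x ∈ Ω, (gmet Φ x).PosDef)
    (ψ : Etz n → ℝ) (hψ : ContDiffOn ℝ (⊤ : ℕ∞) ψ Ω)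
    (hMA : ∀ x ∈ Ω, Real.log ((gmet Φ x).det.re) = Φ x - ψ x)
    (p₀ : Etz n) (hp₀ : p₀ ∈ Ω)
    (hgeo : ∀ i j k : Fin n, wD (fun y => gmet Φ y i j) (dz n k) p₀ = 0) :
    ∑ i, ∑ j, ∑ α, ∑ γ, ginv Φ p₀ j i * ginv Φ p₀ α γ *
        wD (wDbar (fun p => (Φ p : ℂ)) (dz n α)) (dt n) p₀ *
        wD (wDbar (fun y => wD (wDbar (fun p => (Φ p : ℂ)) (dt n)) (dz n γ) y) (dz n j)) (dz n i) p₀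
      = ∑ α, ∑ γ,
          wD (wDbar (fun p => (Φ p : ℂ)) (dz n α)) (dt n) p₀ * ginv Φ p₀ α γ *
            (wD (wDbar (fun p => (Φ p : ℂ)) (dt n)) (dz n γ) p₀
              - wD (wDbar (fun p => (ψ p : ℂ)) (dt n)) (dz n γ) p₀) := by
  have hΦc : ContDiffOn ℝ 4 (fun p => (Φ p : ℂ)) Ω :=
    ofRealCLM.contDiff.comp_contDiffOn (hΦ.of_le (WithTop.coe_le_coe.2 le_top))
  have hψc : ContDiffOn ℝ 2 (fun p => (ψ p : ℂ)) Ω :=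
    ofRealCLM.contDiff.comp_contDiffOn (hψ.of_le (WithTop.coe_le_coe.2 le_top))
  simp only [wD_eq_wirtinger, wDbar_eq_wirtinger,
    ← sum_wirtinger_wirtinger_mul_ginv hΩ hΦc hψc hpos hMA hp₀ hgeo, Finset.mul_sum]
  eta_reduce
  rw [Finset.sum_comm_pairs]
  simp only [mul_assoc, mul_comm, mul_left_comm]

/-- **Evaluation of the term `I₂` (section 3.2).**
In geodesic coordinates at `p₀` and with the Monge–Ampère equation `log det g = Φ - ψ`,
`Σ g^{j̄i} g^{ᾱγ} g_{tᾱ} ∂²g_{γt̄}/∂z^i∂z̄^j = Σ g_{tᾱ} g^{ᾱγ} (g_{γt̄} - ∂²ψ/∂z^γ∂t̄)` at `p₀`. -/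
theorem evaluation_I2 (n : ℕ) (hn : 1 ≤ n) (Ω : Set (Etz n)) (hΩ : IsOpen Ω)
    (Φ : Etz n → ℝ) (hΦ : ContDiffOn ℝ (⊤ : ℕ∞) Φ Ω)
    (hpos : ∀ x ∈ Ω, (gmet Φ x).PosDef)
    (ψ : Etz n → ℝ) (hψ : ContDiffOn ℝ (⊤ : ℕ∞) ψ Ω)
    (hMA : ∀ x ∈ Ω, Real.log ((gmet Φ x).det.re) = Φ x - ψ x)
    (p₀ : Etz n) (hp₀ : p₀ ∈ Ω)
    (hgeo : ∀ i j k : Fin n, wD (fun y => gmet Φ y i j) (dz n k) p₀ = 0) :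
    ∑ i, ∑ j, ∑ α, ∑ γ, ginv Φ p₀ j i * ginv Φ p₀ α γ *
        wD (wDbar (fun p => (Φ p : ℂ)) (dz n α)) (dt n) p₀ *
        wD (wDbar (fun y => wD (wDbar (fun p => (Φ p : ℂ)) (dt n)) (dz n γ) y) (dz n j)) (dz n i) p₀
      = ∑ α, ∑ γ,
          wD (wDbar (fun p => (Φ p : ℂ)) (dz n α)) (dt n) p₀ * ginv Φ p₀ α γ *
            (wD (wDbar (fun p => (Φ p : ℂ)) (dt n)) (dz n γ) p₀
              - wD (wDbar (fun p => (ψ p : ℂ)) (dt n)) (dz n γ) p₀) :=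
  evaluation_I2_general n Ω hΩ Φ hΦ hpos ψ hψ hMA p₀ hp₀ hgeo

end
end
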